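/- arXiv:1310.6172 — 7 statements merged into one kernel-verified Lean document; each statement's English description precedes it below -/
import Mathlib

section
/- In a De Morgan algebra A with a fixed point n for negation satisfying normality (x ∧ ¬x ≤ y ∨ ¬y for all x,y), the set K of complemented elements is a Boolean subalgebra, K = {x : x ∨ ¬x = 1}, and for all a ∈ K the De Morgan negation ¬a equals the complement of a. -/
/-- in a DMF-algebra, the set `K` of complemented elements is a
Boolean subalgebra, `K = {x : x ⊔ ¬x = ⊤}`, and on `K` the De Morgan negation
is complementation. -/
theorem stmt_9 {A : Type*} [DistribLattice A] [BoundedOrder A]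
    (neg : A → A) (n : A)
    (hdn : ∀ x, neg (neg x) = x)
    (hdm : ∀ x y, neg (x ⊓ y) = neg x ⊔ neg y)
    (hfix : neg n = n)
    (hnorm : ∀ x y, x ⊓ neg x ≤ y ⊔ neg y) :
    let K : Set A := {x | ∃ y, x ⊔ y = ⊤ ∧ x ⊓ y = ⊥}
    (⊥ : A) ∈ K ∧ (⊤ : A) ∈ K ∧
    (∀ a ∈ K, ∀ b ∈ K, a ⊓ b ∈ K) ∧
    (∀ a ∈ K, ∀ b ∈ K, a ⊔ b ∈ K) ∧
    (∀ a ∈ K, neg a ∈ K) ∧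
    (K = {x | x ⊔ neg x = ⊤}) ∧
    (∀ a ∈ K, a ⊔ neg a = ⊤ ∧ a ⊓ neg a = ⊥) := by
  have hanti : ∀ x y : A, x ≤ y → neg y ≤ neg x := by
    intro x y hxy
    have h := hdm x y
    rw [inf_eq_left.mpr hxy] at h
    rw [h]; exact le_sup_right
  have hneg_top : neg ⊤ = ⊥ := by
    have h := hanti (neg ⊥) ⊤ le_top
    rw [hdn] at h
    exact le_bot_iff.mp h
  have hneg_bot : neg ⊥ = ⊤ := by rw [← hneg_top, hdn]
  have hdm' : ∀ x y : A, neg (x ⊔ y) = neg x ⊓ neg y := by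
    intro x y
    have h := hdm (neg x) (neg y)
    rw [hdn, hdn] at h
    rw [← h, hdn]
  intro K
  -- key lemma: complemented elements satisfy a ⊔ neg a = ⊤ and a ⊓ neg a = ⊥
  have key : ∀ a ∈ K, a ⊔ neg a = ⊤ ∧ a ⊓ neg a = ⊥ := by
    rintro a ⟨b, hsup, hinf⟩
    have h1 : a ⊓ neg a = ⊥ := by
      have hk : a ⊓ neg a ≤ b ⊔ neg b := hnorm a b
      have h2 : a ⊓ neg a = (a ⊓ neg a) ⊓ (b ⊔ neg b) := (inf_eq_left.mpr hk).symm
      have hb1 : a ⊓ neg a ⊓ b = ⊥ := by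
        apply le_bot_iff.mp
        calc a ⊓ neg a ⊓ b ≤ a ⊓ b := by
              apply inf_le_inf_right
              exact inf_le_left
          _ = ⊥ := hinf
      have hb2 : a ⊓ neg a ⊓ neg b = ⊥ := by
        rw [inf_assoc, ← hdm', hsup, hneg_top, inf_bot_eq]
      rw [inf_sup_left, hb1, hb2, sup_idem] at h2
      exact h2
    refine ⟨?_, h1⟩
    have h3 := congrArg neg h1
    rw [hdm, hdn, hneg_bot, sup_comm] at h3
    exact h3
  refine ⟨⟨⊤, by simp⟩, ⟨⊥, by simp⟩, ?_, ?_, ?_, ?_, key⟩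
  · rintro a ⟨a', ha1, ha2⟩ b ⟨b', hb1, hb2⟩
    refine ⟨a' ⊔ b', ?_, ?_⟩
    · rw [sup_inf_right]
      have e1 : a ⊔ (a' ⊔ b') = ⊤ := by
        rw [← sup_assoc, ha1, top_sup_eq]
      have e2 : b ⊔ (a' ⊔ b') = ⊤ := by
        rw [sup_comm a' b', ← sup_assoc, hb1, top_sup_eq]
      rw [e1, e2, inf_idem]
    · rw [inf_sup_left]
      have e1 : a ⊓ b ⊓ a' = ⊥ := by
        apply le_bot_iff.mp
        calc a ⊓ b ⊓ a' ≤ a ⊓ a' := inf_le_inf_right _ inf_le_left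
          _ = ⊥ := ha2
      have e2 : a ⊓ b ⊓ b' = ⊥ := by
        apply le_bot_iff.mp
        calc a ⊓ b ⊓ b' ≤ b ⊓ b' := inf_le_inf_right _ inf_le_right
          _ = ⊥ := hb2
      rw [e1, e2, sup_idem]
  · rintro a ⟨a', ha1, ha2⟩ b ⟨b', hb1, hb2⟩
    refine ⟨a' ⊓ b', ?_, ?_⟩
    · rw [sup_inf_left]
      have e1 : a ⊔ b ⊔ a' = ⊤ := by
        apply top_le_iff.mp
        calc (⊤ : A) = a ⊔ a' := ha1.symm
          _ ≤ a ⊔ b ⊔ a' := sup_le_sup_right le_sup_left _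
      have e2 : a ⊔ b ⊔ b' = ⊤ := by
        apply top_le_iff.mp
        calc (⊤ : A) = b ⊔ b' := hb1.symm
          _ ≤ a ⊔ b ⊔ b' := sup_le_sup_right le_sup_right _
      rw [e1, e2, inf_idem]
    · rw [inf_sup_right]
      have e1 : a ⊓ (a' ⊓ b') = ⊥ := by
        rw [← inf_assoc, ha2, bot_inf_eq]
      have e2 : b ⊓ (a' ⊓ b') = ⊥ := by
        rw [inf_comm a' b', ← inf_assoc, hb2, bot_inf_eq]
      rw [e1, e2, sup_idem]
  · intro a ha
    obtain ⟨h1, h2⟩ := key a ha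
    exact ⟨a, by rw [sup_comm]; exact h1, by rw [inf_comm]; exact h2⟩
  · ext x
    constructor
    · intro hx
      exact (key x hx).1
    · intro hx
      refine ⟨neg x, hx, ?_⟩
      have h := congrArg neg hx
      rw [hdm', hdn, hneg_top] at h
      rw [inf_comm]
      exact h
end

section
/- If A is a bounded distributive lattice, then π(A) = {(a,b) ∈ A × A : a ∧ b = 0}, equipped with (a,b)∧(c,d)=(a∧c, b∨d), (a,b)∨(c,d)=(a∨c, b∧d), ¬(a,b)=(b,a), 0=(0,1), 1=(1,0), n=(0,0), is a DMF-algebra (a De Morgan algebra with fixed point n for negation satisfying normality). -/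
namespace Stmt10

variable {A : Type*} [DistribLattice A] [BoundedOrder A]

/-- Disjoint pairs over `A` (the carrier of `π(A)`). -/
def Disj (p : A × A) : Prop := p.1 ⊓ p.2 = ⊥

/-- Meet of `π(A)`. -/
def pmeet (p q : A × A) : A × A := (p.1 ⊓ q.1, p.2 ⊔ q.2)

/-- Join of `π(A)`. -/
def pjoin (p q : A × A) : A × A := (p.1 ⊔ q.1, p.2 ⊓ q.2)

/-- Negation of `π(A)`. -/
def pneg (p : A × A) : A × A := (p.2, p.1)

/-- The order of `π(A)`. -/
def ple (p q : A × A) : Prop := p.1 ≤ q.1 ∧ q.2 ≤ p.2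

/-- `π(A)` = the disjoint pairs over a bounded distributive lattice `A`,
with the indicated operations, is a DMF-algebra. -/
theorem stmt_10 :
    -- closure of the carrier under the operations and constants
    (∀ p q : A × A, Disj p → Disj q → Disj (pmeet p q)) ∧
    (∀ p q : A × A, Disj p → Disj q → Disj (pjoin p q)) ∧
    (∀ p : A × A, Disj p → Disj (pneg p)) ∧
    Disj ((⊥ : A), (⊤ : A)) ∧ Disj ((⊤ : A), (⊥ : A)) ∧ Disj ((⊥ : A), (⊥ : A)) ∧
    -- bounded distributive lattice laws
    (∀ p q : A × A, pmeet p q = pmeet q p) ∧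
    (∀ p q : A × A, pjoin p q = pjoin q p) ∧
    (∀ p q r : A × A, pmeet p (pmeet q r) = pmeet (pmeet p q) r) ∧
    (∀ p q r : A × A, pjoin p (pjoin q r) = pjoin (pjoin p q) r) ∧
    (∀ p q : A × A, pmeet p (pjoin p q) = p) ∧
    (∀ p q : A × A, pjoin p (pmeet p q) = p) ∧
    (∀ p q r : A × A, pmeet p (pjoin q r) = pjoin (pmeet p q) (pmeet p r)) ∧
    (∀ p : A × A, Disj p → ple ((⊥ : A), (⊤ : A)) p) ∧
    (∀ p : A × A, Disj p → ple p ((⊤ : A), (⊥ : A))) ∧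
    -- De Morgan algebra laws
    (∀ p : A × A, pneg (pneg p) = p) ∧
    (∀ p q : A × A, pneg (pmeet p q) = pjoin (pneg p) (pneg q)) ∧
    -- fixed point and normality
    pneg ((⊥ : A), (⊥ : A)) = ((⊥ : A), (⊥ : A)) ∧
    (∀ p q : A × A, Disj p → Disj q →
      ple (pmeet p (pneg p)) (pjoin q (pneg q))) := by
  have hbot : ∀ p q : A × A, Disj p → Disj q → Disj (pmeet p q) := by
    intro p q hp hq
    simp only [Disj, pmeet] at *
    rw [inf_sup_left]
    apply sup_eq_bot_iff.2
    constructor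
    · rw [inf_comm p.1 q.1, inf_assoc]; simp [hp]
    · rw [inf_assoc, hq]; simp
  refine ⟨hbot, ?_, ?_, ?_, ?_, ?_, ?_, ?_, ?_, ?_, ?_, ?_, ?_, ?_, ?_, ?_, ?_, ?_, ?_⟩
  · intro p q hp hq
    simp only [Disj, pjoin] at *
    have h1 : p.2 ⊓ q.2 ⊓ p.1 = ⊥ := by
      rw [inf_right_comm, inf_comm p.2 p.1, hp]; simp
    have h2 : p.2 ⊓ q.2 ⊓ q.1 = ⊥ := by
      rw [inf_assoc, inf_comm q.2 q.1, hq]; simp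
    rw [inf_comm, inf_sup_left, h1, h2, sup_idem]
  · intro p hp; simp only [Disj, pneg] at *; rw [inf_comm]; exact hp
  · simp [Disj]
  · simp [Disj]
  · simp [Disj]
  · intro p q; unfold pmeet; rw [inf_comm, sup_comm]
  · intro p q; unfold pjoin; rw [inf_comm, sup_comm]
  · intro p q r; unfold pmeet; rw [inf_assoc, sup_assoc]
  · intro p q r; unfold pjoin; rw [inf_assoc, sup_assoc]
  · intro p q; unfold pmeet pjoin; rw [inf_sup_self, sup_inf_self]
  · intro p q; unfold pmeet pjoin; rw [sup_inf_self, inf_sup_self]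
  · intro p q r; simp only [pmeet, pjoin]
    exact Prod.ext (inf_sup_left p.1 q.1 r.1) (sup_inf_left p.2 q.2 r.2)
  · intro p _; exact ⟨bot_le, le_top⟩
  · intro p _; exact ⟨le_top, bot_le⟩
  · intro p; rfl
  · intro p q; rfl
  · rfl
  · intro p q hp hq
    simp only [Disj] at hp hq
    refine ⟨?_, ?_⟩
    · show p.1 ⊓ p.2 ≤ q.1 ⊔ q.2
      rw [hp]; exact bot_le
    · show q.2 ⊓ q.1 ≤ p.2 ⊔ p.1
      rw [inf_comm, hq]; exact bot_le

end Stmt10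
end

section
/- If A is a DMF-algebra, then the map φ(x) = (x ∨ n, ¬x ∨ n) is an injective DMF-algebra homomorphism from A into π(∇_A), where ∇_A = [n,1] is the bounded lattice of elements above n and π(∇_A) is the DMF-algebra of disjoint pairs over ∇_A (pairs (a,b) with a,b ≥ n and a ∧ b = n). -/
/-- every DMF-algebra `A` embeds into `π(∇_A)` via
`φ x = (x ⊔ n, ¬x ⊔ n)`.  The codomain `π(∇_A)` consists of the pairs `(a,b)`
with `n ≤ a`, `n ≤ b` and `a ⊓ b = n` (its meet is `(a⊓c, b⊔d)`, its join
`(a⊔c, b⊓d)`, its negation the swap, its bottom `(n,⊤)`, top `(⊤,n)` and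
fixed point `(n,n)`). -/
theorem stmt_11 {A : Type*} [DistribLattice A] [BoundedOrder A]
    (neg : A → A) (n : A)
    (hdn : ∀ x, neg (neg x) = x)
    (hdm : ∀ x y, neg (x ⊓ y) = neg x ⊔ neg y)
    (hfix : neg n = n)
    (hnorm : ∀ x y, x ⊓ neg x ≤ y ⊔ neg y) :
    let φ : A → A × A := fun x => (x ⊔ n, neg x ⊔ n)
    -- φ is injective
    Function.Injective φ ∧
    -- φ lands in π(∇_A): both components lie in ∇ = [n,1] and meet in n
    (∀ x, n ≤ (φ x).1 ∧ n ≤ (φ x).2 ∧ (φ x).1 ⊓ (φ x).2 = n) ∧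
    -- φ preserves meet and join (computed in π(∇_A))
    (∀ x y, φ (x ⊓ y) = ((φ x).1 ⊓ (φ y).1, (φ x).2 ⊔ (φ y).2)) ∧
    (∀ x y, φ (x ⊔ y) = ((φ x).1 ⊔ (φ y).1, (φ x).2 ⊓ (φ y).2)) ∧
    -- φ preserves negation (negation in π(∇_A) is the swap)
    (∀ x, φ (neg x) = ((φ x).2, (φ x).1)) ∧
    -- φ preserves 0, 1 and n
    φ ⊥ = (n, ⊤) ∧ φ ⊤ = (⊤, n) ∧ φ n = (n, n) := by
  intro φ
  have hanti : ∀ x y : A, x ≤ y → neg y ≤ neg x := by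
    intro x y hxy
    have h1 : x ⊓ y = x := inf_eq_left.mpr hxy
    have := hdm x y
    rw [h1] at this
    rw [this]; exact le_sup_right
  have hdm' : ∀ x y, neg (x ⊔ y) = neg x ⊓ neg y := by
    intro x y
    have := hdm (neg x) (neg y)
    rw [hdn, hdn] at this
    rw [← this, hdn]
  have hnegtop : neg ⊤ = ⊥ := by
    apply le_bot_iff.mp
    have := hanti (neg ⊥) ⊤ le_top
    rwa [hdn] at this
  have hnegbot : neg ⊥ = ⊤ := by rw [← hnegtop, hdn]
  have hmeetn : ∀ x : A, x ⊓ neg x ≤ n := by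
    intro x
    have := hnorm x n
    rwa [hfix, sup_idem] at this
  refine ⟨?_, ?_, ?_, ?_, ?_, ?_, ?_, ?_⟩
  · intro x y hxy
    have h1 : x ⊔ n = y ⊔ n := congrArg Prod.fst hxy
    have h2 : neg x ⊔ n = neg y ⊔ n := congrArg Prod.snd hxy
    have h3 : x ⊓ n = y ⊓ n := by
      have := congrArg neg h2
      rw [hdm', hdm', hdn, hdn, hfix] at this
      exact this
    exact eq_of_inf_eq_sup_eq h3 h1
  · intro x
    refine ⟨le_sup_right, le_sup_right, ?_⟩
    show (x ⊔ n) ⊓ (neg x ⊔ n) = n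
    rw [← sup_inf_right]
    exact sup_eq_right.mpr (hmeetn x)
  · intro x y
    show ((x ⊓ y) ⊔ n, neg (x ⊓ y) ⊔ n) = _
    rw [hdm]
    refine Prod.ext ?_ ?_
    · exact sup_inf_right x y n
    · show (neg x ⊔ neg y) ⊔ n = (neg x ⊔ n) ⊔ (neg y ⊔ n)
      rw [sup_sup_sup_comm, sup_idem]
  · intro x y
    show ((x ⊔ y) ⊔ n, neg (x ⊔ y) ⊔ n) = _
    rw [hdm']
    refine Prod.ext ?_ ?_
    · show (x ⊔ y) ⊔ n = (x ⊔ n) ⊔ (y ⊔ n)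
      rw [sup_sup_sup_comm, sup_idem]
    · exact sup_inf_right (neg x) (neg y) n
  · intro x
    show (neg x ⊔ n, neg (neg x) ⊔ n) = _
    rw [hdn]
  · show (⊥ ⊔ n, neg ⊥ ⊔ n) = _
    rw [hnegbot, bot_sup_eq, top_sup_eq]
  · show (⊤ ⊔ n, neg ⊤ ⊔ n) = _
    rw [hnegtop, bot_sup_eq, top_sup_eq]
  · show (n ⊔ n, neg n ⊔ n) = _
    rw [hfix, sup_idem]
end

section
/- If A is a DMF-algebra whose sublattice ∇ = [n,1] is a Boolean algebra, then every partial valuation v̄ on A is isotone: a ≤ b implies v̄(a) ⪯ v̄(b). -/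
/-- The order on partial probability values: `(x,y) ⪯ (w,z)` iff `x ≤ w` and `z ≤ y`. -/
def preceq (p q : ℝ × ℝ) : Prop := p.1 ≤ q.1 ∧ q.2 ≤ p.2

/-- if `∇ = [n,⊤]` is a Boolean algebra (every element of `∇` has a
complement in `∇`), then every partial valuation on the DMF-algebra is isotone. -/
theorem stmt_16 {A : Type*} [DistribLattice A] [BoundedOrder A]
    (neg : A → A) (n : A)
    (hdn : ∀ x, neg (neg x) = x)
    (hdm : ∀ x y, neg (x ⊓ y) = neg x ⊔ neg y)
    (hfix : neg n = n)
    (hnorm : ∀ x y, x ⊓ neg x ≤ y ⊔ neg y)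
    (hbool : ∀ x, n ≤ x → ∃ y, n ≤ y ∧ x ⊔ y = ⊤ ∧ x ⊓ y = n)
    (v : A → ℝ × ℝ)
    (hT : ∀ a, 0 ≤ (v a).1 ∧ 0 ≤ (v a).2 ∧ (v a).1 + (v a).2 ≤ 1)
    (h0 : v ⊥ = ((0 : ℝ), (1 : ℝ)))
    (hmod : ∀ a b, v (a ⊔ b) = v a + v b - v (a ⊓ b))
    (hneg : ∀ a, v (neg a) = ((v a).2, (v a).1))
    (hpos : ∀ a, n ≤ a → preceq (0, 0) (v a)) :
    ∀ a b : A, a ≤ b → preceq (v a) (v b) := by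
  have hanti : ∀ x y : A, x ≤ y → neg y ≤ neg x := by
    intro x y hxy
    have h := hdm x y
    rw [inf_eq_left.mpr hxy] at h
    rw [h]; exact le_sup_right
  have h2 : ∀ x : A, n ≤ x → (v x).2 = 0 := fun x hx =>
    le_antisymm (hpos x hx).2 (hT x).2.1
  have h1 : ∀ x : A, x ≤ n → (v x).1 = 0 := by
    intro x hx
    have hnx : n ≤ neg x := by
      have := hanti x n hx; rwa [hfix] at this
    have h := h2 (neg x) hnx
    rw [hneg x] at h
    exact h
  have hn : (v n).1 = 0 := h1 n le_rfl
  have hnabla : ∀ a b : A, n ≤ a → a ≤ b → (v a).1 ≤ (v b).1 := by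
    intro a b hna hab
    obtain ⟨a', hna', hsup, hinf⟩ := hbool a hna
    have hnb : n ≤ b := le_trans hna hab
    have hsup2 : a ⊔ (b ⊓ a') = b := by
      rw [sup_inf_left, sup_eq_right.mpr hab, hsup, inf_top_eq]
    have hinf2 : a ⊓ (b ⊓ a') = n := by
      rw [inf_left_comm, hinf, inf_eq_right.mpr hnb]
    have hm := hmod a (b ⊓ a')
    rw [hsup2, hinf2] at hm
    have hm1 := congrArg Prod.fst hm
    simp only [Prod.fst_add, Prod.fst_sub] at hm1
    have hge : 0 ≤ (v (b ⊓ a')).1 := (hT _).1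
    linarith [hm1, hn.symm ▸ hge]
  have hfst : ∀ a b : A, a ≤ b → (v a).1 ≤ (v b).1 := by
    intro a b hab
    have hma := congrArg Prod.fst (hmod a n)
    have hmb := congrArg Prod.fst (hmod b n)
    simp only [Prod.fst_add, Prod.fst_sub] at hma hmb
    rw [hn, h1 (a ⊓ n) inf_le_right] at hma
    rw [hn, h1 (b ⊓ n) inf_le_right] at hmb
    have h := hnabla (a ⊔ n) (b ⊔ n) le_sup_right (sup_le_sup_right hab n)
    linarith
  intro a b hab
  refine ⟨hfst a b hab, ?_⟩
  have h := hfst (neg b) (neg a) (hanti a b hab)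
  rwa [hneg a, hneg b] at h
end

section
/- Let A be a DMF-algebra and a ∈ A with ¬a ≤ a. Then the interval [¬a, a] with the inherited meet, join and negation, bottom ¬a, top a, and fixed point n is a DMF-algebra, and the map f(x) = (x ∨ ¬a) ∧ a is a surjective DMF-algebra homomorphism from A onto [¬a,a]. -/
/-- for `¬a ≤ a`, the interval `[¬a, a]` is a DMF-algebra (with the
inherited operations, bottom `¬a`, top `a`, fixed point `n`) and
`f x = (x ⊔ ¬a) ⊓ a` is a surjective DMF-homomorphism from `A` onto `[¬a,a]`. -/
theorem stmt_17 {A : Type*} [DistribLattice A] [BoundedOrder A]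
    (neg : A → A) (n : A)
    (hdn : ∀ x, neg (neg x) = x)
    (hdm : ∀ x y, neg (x ⊓ y) = neg x ⊔ neg y)
    (hfix : neg n = n)
    (hnorm : ∀ x y, x ⊓ neg x ≤ y ⊔ neg y)
    (a : A) (ha : neg a ≤ a) :
    let f : A → A := fun x => (x ⊔ neg a) ⊓ a
    -- the interval [¬a,a] contains n and is closed under negation
    (neg a ≤ n ∧ n ≤ a) ∧
    (∀ x, neg a ≤ x → x ≤ a → neg a ≤ neg x ∧ neg x ≤ a) ∧
    -- f maps A into the interval [¬a,a]
    (∀ x, neg a ≤ f x ∧ f x ≤ a) ∧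
    -- f is surjective onto [¬a,a]
    (∀ y, neg a ≤ y → y ≤ a → ∃ x, f x = y) ∧
    -- f is a DMF-homomorphism (the bottom of [¬a,a] is ¬a, the top is a)
    (∀ x y, f (x ⊓ y) = f x ⊓ f y) ∧
    (∀ x y, f (x ⊔ y) = f x ⊔ f y) ∧
    (∀ x, f (neg x) = neg (f x)) ∧
    f ⊥ = neg a ∧ f ⊤ = a ∧ f n = n := by

  intro f
  -- auxiliary facts
  have hdm' : ∀ x y, neg (x ⊔ y) = neg x ⊓ neg y := by
    intro x y
    have := hdm (neg x) (neg y)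
    rw [hdn, hdn] at this
    calc neg (x ⊔ y) = neg (neg (neg x ⊓ neg y)) := by rw [this]
      _ = neg x ⊓ neg y := hdn _
  have hanti : ∀ x y, x ≤ y → neg y ≤ neg x := by
    intro x y hxy
    have : x ⊔ y = y := sup_eq_right.mpr hxy
    have h2 : neg y = neg x ⊓ neg y := by
      conv_lhs => rw [← this, hdm']
    exact h2 ▸ inf_le_left
  have hna : neg a ≤ n := by
    have := hnorm a n
    rwa [hfix, sup_idem, inf_eq_right.mpr ha] at this
  have hn : n ≤ a := by
    have := hnorm n a
    rwa [hfix, inf_idem, sup_eq_left.mpr ha] at this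
  refine ⟨⟨hna, hn⟩, ?_, ?_, ?_, ?_, ?_, ?_, ?_, ?_, ?_⟩
  · intro x h1 h2
    constructor
    · exact hanti _ _ h2
    · have := hanti _ _ h1
      rwa [hdn] at this
  · intro x
    exact ⟨le_inf (le_trans le_sup_right le_rfl) ha, inf_le_right⟩
  · intro y h1 h2
    exact ⟨y, by simp [f, sup_eq_left.mpr h1, inf_eq_left.mpr h2]⟩
  · intro x y
    show ((x ⊓ y) ⊔ neg a) ⊓ a = ((x ⊔ neg a) ⊓ a) ⊓ ((y ⊔ neg a) ⊓ a)
    rw [sup_inf_right]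
    ac_rfl
  · intro x y
    show ((x ⊔ y) ⊔ neg a) ⊓ a = ((x ⊔ neg a) ⊓ a) ⊔ ((y ⊔ neg a) ⊓ a)
    rw [← inf_sup_right]
    congr 1
    rw [sup_sup_sup_comm, sup_idem]
  · intro x
    show (neg x ⊔ neg a) ⊓ a = neg ((x ⊔ neg a) ⊓ a)
    rw [hdm, hdm', hdn, sup_inf_right, sup_eq_left.mpr ha]
  · show (⊥ ⊔ neg a) ⊓ a = neg a
    rw [bot_sup_eq, inf_eq_left.mpr ha]
  · show (⊤ ⊔ neg a) ⊓ a = a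
    rw [top_sup_eq, top_inf_eq]
  · show (n ⊔ neg a) ⊓ a = n
    rw [sup_eq_left.mpr hna, inf_eq_left.mpr hn]
end

section
/- Let A be a DMF-algebra, v̄ an isotone partial valuation on A, and h ∈ ∇ (i.e., n ≤ h) with v̄(h)₀ ≠ 0. Then the function v̄_h : [¬h, h] → T defined by v̄_h(x) = v̄(x) · (1/v̄(h)₀) (scalar multiplication of both coordinates) is well-defined (takes values in T) and satisfies the axioms of a partial valuation on the DMF-algebra [¬h, h]. -/
/-- for an isotone partial valuation `v̄` on a DMF-algebra and
`h ∈ ∇` with `v̄(h)₀ ≠ 0`, the relativized valuation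
`v̄_h x = v̄ x · (1 / v̄(h)₀)` takes values in `T` and satisfies the axioms of a
partial valuation on the DMF-algebra `[¬h, h]` (bottom `¬h`, top `h`, fixed
point `n`). -/
theorem stmt_18 {A : Type*} [DistribLattice A] [BoundedOrder A]
    (neg : A → A) (n : A)
    (hdn : ∀ x, neg (neg x) = x)
    (hdm : ∀ x y, neg (x ⊓ y) = neg x ⊔ neg y)
    (hfix : neg n = n)
    (hnorm : ∀ x y, x ⊓ neg x ≤ y ⊔ neg y)
    (v : A → ℝ × ℝ)
    (hT : ∀ a, 0 ≤ (v a).1 ∧ 0 ≤ (v a).2 ∧ (v a).1 + (v a).2 ≤ 1)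
    (h0 : v ⊥ = ((0 : ℝ), (1 : ℝ)))
    (hmod : ∀ a b, v (a ⊔ b) = v a + v b - v (a ⊓ b))
    (hneg : ∀ a, v (neg a) = ((v a).2, (v a).1))
    (hpos : ∀ a, n ≤ a → preceq (0, 0) (v a))
    (hiso : ∀ a b : A, a ≤ b → preceq (v a) (v b))
    (h : A) (hh : n ≤ h) (hh0 : (v h).1 ≠ 0) :
    let vh : A → ℝ × ℝ := fun x => ((v x).1 / (v h).1, (v x).2 / (v h).1)
    -- vh takes its values in T on the interval [¬h, h]
    (∀ x, neg h ≤ x → x ≤ h →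
      0 ≤ (vh x).1 ∧ 0 ≤ (vh x).2 ∧ (vh x).1 + (vh x).2 ≤ 1) ∧
    -- axiom 1: the bottom of [¬h,h] is ¬h
    vh (neg h) = ((0 : ℝ), (1 : ℝ)) ∧
    -- axiom 2
    (∀ x y, neg h ≤ x → x ≤ h → neg h ≤ y → y ≤ h →
      vh (x ⊔ y) = vh x + vh y - vh (x ⊓ y)) ∧
    -- axiom 3
    (∀ x, neg h ≤ x → x ≤ h → vh (neg x) = ((vh x).2, (vh x).1)) ∧
    -- axiom 4
    (∀ x, neg h ≤ x → x ≤ h → n ≤ x → preceq (0, 0) (vh x)) := by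
  intro vh
  have hpos1 : 0 < (v h).1 := lt_of_le_of_ne (hT h).1 (Ne.symm hh0)
  have hh2 : (v h).2 = 0 := le_antisymm (hpos h hh).2 (hT h).2.1
  have hanti : ∀ a b : A, a ≤ b → neg b ≤ neg a := by
    intro a b hab
    have h1 : neg (a ⊓ b) = neg a := by rw [inf_eq_left.mpr hab]
    rw [hdm] at h1
    exact sup_eq_left.mp h1
  refine ⟨?_, ?_, ?_, ?_, ?_⟩
  · intro x hx1 hx2
    have hnx : neg x ≤ h := by have := hanti _ _ hx1; rwa [hdn] at this
    have hsup : x ⊔ neg x ≤ h := sup_le hx2 hnx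
    have hinf : x ⊓ neg x ≤ n := le_trans (hnorm x n) (by rw [hfix, sup_idem])
    have h1 : (v (x ⊓ neg x)).1 ≤ 0 := by
      have hn : n ≤ neg (x ⊓ neg x) := by
        have := hanti _ _ hinf; rwa [hfix] at this
      have := (hpos _ hn).2
      rw [hneg] at this
      simpa using this
    have hsum := (hiso _ _ hsup).1
    rw [hmod] at hsum
    simp only [Prod.fst_sub, Prod.fst_add, hneg] at hsum
    have key : (v x).1 + (v x).2 ≤ (v h).1 := by linarith
    refine ⟨div_nonneg (hT x).1 hpos1.le, div_nonneg (hT x).2.1 hpos1.le, ?_⟩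
    show (v x).1 / (v h).1 + (v x).2 / (v h).1 ≤ 1
    rw [← add_div, div_le_one hpos1]
    exact key
  · show ((v (neg h)).1 / (v h).1, (v (neg h)).2 / (v h).1) = ((0:ℝ), (1:ℝ))
    rw [hneg, hh2]
    simp [div_self hh0]
  · intro x y _ _ _ _
    show ((v (x ⊔ y)).1 / (v h).1, (v (x ⊔ y)).2 / (v h).1) = _
    rw [hmod]
    simp only [vh, Prod.ext_iff, Prod.fst_add, Prod.fst_sub, Prod.snd_add, Prod.snd_sub]
    constructor <;> ring
  · intro x _ _
    show ((v (neg x)).1 / (v h).1, (v (neg x)).2 / (v h).1) = _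
    rw [hneg]
  · intro x _ _ hnx
    have := hpos x hnx
    exact ⟨div_nonneg this.1 hpos1.le, div_nonpos_of_nonpos_of_nonneg this.2 hpos1.le⟩
end

section
/- Let A be a DMF-algebra, v̄ an isotone partial valuation on A, and e, h ∈ ∇ (i.e., n ≤ e and n ≤ h) with v̄(e)₀ ≠ 0 and v̄(h)₀ ≠ 0. Define v̄(x|h) = v̄((x ∨ ¬h) ∧ h) · (1/v̄(h)₀). Then the weak Bayes theorem holds: v̄(h|e) = v̄(e|h) · (v̄(h)₀ / v̄(e)₀). -/
/-- weak Bayes theorem: for an isotone partial valuation `v̄` and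
`e, h ∈ ∇` with `v̄(e)₀ ≠ 0 ≠ v̄(h)₀`, setting
`v̄(x|h) = v̄((x ⊔ ¬h) ⊓ h) · (1/v̄(h)₀)`, we have
`v̄(h|e) = v̄(e|h) · (v̄(h)₀ / v̄(e)₀)`. -/
theorem stmt_19 {A : Type*} [DistribLattice A] [BoundedOrder A]
    (neg : A → A) (n : A)
    (hdn : ∀ x, neg (neg x) = x)
    (hdm : ∀ x y, neg (x ⊓ y) = neg x ⊔ neg y)
    (hfix : neg n = n)
    (hnorm : ∀ x y, x ⊓ neg x ≤ y ⊔ neg y)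
    (v : A → ℝ × ℝ)
    (hT : ∀ a, 0 ≤ (v a).1 ∧ 0 ≤ (v a).2 ∧ (v a).1 + (v a).2 ≤ 1)
    (h0 : v ⊥ = ((0 : ℝ), (1 : ℝ)))
    (hmod : ∀ a b, v (a ⊔ b) = v a + v b - v (a ⊓ b))
    (hneg : ∀ a, v (neg a) = ((v a).2, (v a).1))
    (hpos : ∀ a, n ≤ a → preceq (0, 0) (v a))
    (hiso : ∀ a b : A, a ≤ b → preceq (v a) (v b))
    (e h : A) (he : n ≤ e) (hh : n ≤ h)
    (he0 : (v e).1 ≠ 0) (hh0 : (v h).1 ≠ 0) :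
    let cond : A → A → ℝ × ℝ := fun x y =>
      ((v ((x ⊔ neg y) ⊓ y)).1 / (v y).1, (v ((x ⊔ neg y) ⊓ y)).2 / (v y).1)
    cond h e = ((cond e h).1 * ((v h).1 / (v e).1),
                (cond e h).2 * ((v h).1 / (v e).1)) := by
  -- negation is antitone
  have hanti : ∀ x y : A, x ≤ y → neg y ≤ neg x := by
    intro x y hxy
    have : neg (x ⊓ y) = neg x ⊔ neg y := hdm x y
    rw [inf_eq_left.mpr hxy] at this
    exact le_of_sup_eq (by rw [sup_comm, ← this])
  -- key lattice identity: (a ⊔ neg b) ⊓ b = a ⊓ b for n ≤ a, n ≤ b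
  have key : ∀ a b : A, n ≤ a → n ≤ b → (a ⊔ neg b) ⊓ b = a ⊓ b := by
    intro a b ha hb
    have hnb : neg b ≤ a := le_trans (by simpa [hfix] using hanti n b hb) ha
    have hnb2 : neg b ≤ b := le_trans (by simpa [hfix] using hanti n b hb) hb
    rw [inf_comm, inf_sup_left]
    rw [inf_eq_right.mpr hnb2]
    rw [sup_eq_left.mpr (le_inf hnb2 hnb), inf_comm]
  intro cond
  have h1 : (h ⊔ neg e) ⊓ e = (e ⊔ neg h) ⊓ h := by
    rw [key h e hh he, key e h he hh, inf_comm]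
  show cond h e = _
  simp only [cond, h1]
  rw [Prod.ext_iff]
  constructor <;> · simp only []; field_simp
end
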